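/- In the two-player delegation game with complete network, if q_1 - e_1 > 1/2, q_2 - e_2 > 1/2, q_2 > q_1 - e_1 and q_1 > q_2 - e_2, then the game has exactly two pure Nash equilibria: (vote, delegate-to-1) and (delegate-to-2, vote), and the profile (delegate-to-2, delegate-to-1) yielding payoffs (1/2, 1/2) is not an equilibrium. -/

import Mathlib

/-!
Each player strictly prefers to do the opposite of the other: voting beats the cycle of mutual
delegation since `1/2 < q_i - e_i`, and delegating to a voter beats voting oneself since
`q_i - e_i < q_j`. In such an anti-coordination game a strategy is a best reply exactly when it
differs from the opponent's, so the equilibria are the two mismatched profiles.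
-/

def IsBestReply {α : Type*} [Preorder α] (u : Bool → Bool → α) (s t : Bool) : Prop :=
  ∀ a, u a t ≤ u s t

theorem isBestReply_iff_eq_not {α : Type*} [Preorder α] {u : Bool → Bool → α}
    (hu : ∀ t, u t t < u (!t) t) (s t : Bool) : IsBestReply u s t ↔ s = !t := by
  constructor
  · intro hs
    by_contra hne
    obtain rfl : s = t := by cases s <;> cases t <;> simp_all
    exact (hu s).not_ge (hs (!s))
  · rintro rfl a
    cases a <;> cases t
    all_goals first | exact le_rfl | exact (hu _).le

/-- `own`/`other` is `true` for voting and `false` for delegating to the other player, whose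
accuracy is `q'`. -/
noncomputable def delegationPayoff (q e q' : ℝ) (own other : Bool) : ℝ :=
  if own then q - e else if other then q' else 1 / 2

theorem delegationPayoff_lt_not {q e q' : ℝ} (hvote : 1 / 2 < q - e) (hdelegate : q - e < q')
    (t : Bool) : delegationPayoff q e q' t t < delegationPayoff q e q' (!t) t := by
  cases t
  · simpa [delegationPayoff] using hvote
  · simpa [delegationPayoff] using hdelegate

/-- The two-player delegation game with complete network: under the anti-coordination
inequalities, the only pure Nash equilibria are (vote, delegate) and (delegate, vote);
in particular (delegate, delegate), yielding payoffs (1/2, 1/2), is not an equilibrium.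
Strategy `true` means voting directly, `false` means delegating to the other player. -/
theorem two_player_delegation_game_NE (q1 q2 e1 e2 : ℝ)
    (h1 : 1/2 < q1 - e1) (h2 : 1/2 < q2 - e2)
    (h3 : q1 - e1 < q2) (h4 : q2 - e2 < q1) :
    ∀ s1 s2 : Bool,
      (((∀ a : Bool, (if a then q1 - e1 else if s2 then q2 else 1/2) ≤
          (if s1 then q1 - e1 else if s2 then q2 else 1/2)) ∧
        (∀ b : Bool, (if b then q2 - e2 else if s1 then q1 else 1/2) ≤
          (if s2 then q2 - e2 else if s1 then q1 else 1/2)))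
      ↔ ((s1 = true ∧ s2 = false) ∨ (s1 = false ∧ s2 = true))) := by
  intro s1 s2
  change IsBestReply (delegationPayoff q1 e1 q2) s1 s2 ∧
      IsBestReply (delegationPayoff q2 e2 q1) s2 s1 ↔ _
  rw [isBestReply_iff_eq_not (delegationPayoff_lt_not h1 h3),
    isBestReply_iff_eq_not (delegationPayoff_lt_not h2 h4)]
  cases s1 <;> cases s2 <;> decide
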